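/- arXiv:1405.1576 — 5 statements merged into one kernel-verified Lean document; each statement's English description precedes it below -/
import Mathlib

section
/- Let T be a tournament on n ≥ 4 vertices. Let C3(T) denote the number of 3-element vertex subsets spanning a cyclic triangle, C4(T) the number of 4-element vertex subsets whose induced subtournament contains a directed 4-cycle, and T4(T) the number of 4-element vertex subsets spanning a transitive subtournament. Then T4(T) − C4(T) = C(n,4) − (n−3)·C3(T). Equivalently, in density form, t4(T) − c4(T) = 1 − 4·c3(T), where c3(T) = C3(T)/C(n,3), c4(T) = C4(T)/C(n,4), t4(T) = T4(T)/C(n,4). -/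
open Finset

/-- A tournament on `Fin n`: an orientation of the complete graph, i.e. no loops and
for all distinct `x, y` exactly one of `r x y`, `r y x` holds. -/
def IsTournament {n : ℕ} (r : Fin n → Fin n → Prop) : Prop :=
  (∀ x, ¬ r x x) ∧ ∀ x y : Fin n, x ≠ y → ((r x y ∧ ¬ r y x) ∨ (r y x ∧ ¬ r x y))

/-- `s` spans a cyclic triangle: `s = {x,y,z}` with `x→y→z→x`. -/
def IsCyclicTriple {n : ℕ} (r : Fin n → Fin n → Prop) (s : Finset (Fin n)) : Prop :=
  ∃ x y z : Fin n, x ≠ y ∧ y ≠ z ∧ x ≠ z ∧ s = {x, y, z} ∧ r x y ∧ r y z ∧ r z x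

/-- `s` spans a transitive triple. -/
def IsTransTriple {n : ℕ} (r : Fin n → Fin n → Prop) (s : Finset (Fin n)) : Prop :=
  ∃ x y z : Fin n, x ≠ y ∧ y ≠ z ∧ x ≠ z ∧ s = {x, y, z} ∧ r x y ∧ r y z ∧ r x z

/-- `s` contains a directed 4-cycle through all of its (four) elements. -/
def HasCycle4 {n : ℕ} (r : Fin n → Fin n → Prop) (s : Finset (Fin n)) : Prop :=
  ∃ a b c d : Fin n, a ≠ b ∧ a ≠ c ∧ a ≠ d ∧ b ≠ c ∧ b ≠ d ∧ c ≠ d ∧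
    s = {a, b, c, d} ∧ r a b ∧ r b c ∧ r c d ∧ r d a

/-- `s` spans a transitive 4-vertex subtournament. -/
def IsTrans4 {n : ℕ} (r : Fin n → Fin n → Prop) (s : Finset (Fin n)) : Prop :=
  ∃ a b c d : Fin n, a ≠ b ∧ a ≠ c ∧ a ≠ d ∧ b ≠ c ∧ b ≠ d ∧ c ≠ d ∧
    s = {a, b, c, d} ∧ r a b ∧ r a c ∧ r a d ∧ r b c ∧ r b d ∧ r c d

open Classical in
/-- `C3(T)`: number of 3-element vertex subsets spanning a cyclic triangle. -/
noncomputable def cyc3Count {n : ℕ} (r : Fin n → Fin n → Prop) : ℕ :=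
  ((univ.powersetCard 3).filter (fun s => IsCyclicTriple r s)).card

open Classical in
/-- `T3(T)`: number of 3-element vertex subsets spanning a transitive triple. -/
noncomputable def trans3Count {n : ℕ} (r : Fin n → Fin n → Prop) : ℕ :=
  ((univ.powersetCard 3).filter (fun s => IsTransTriple r s)).card

open Classical in
/-- `C4(T)`: number of 4-element vertex subsets containing a directed 4-cycle. -/
noncomputable def cyc4Count {n : ℕ} (r : Fin n → Fin n → Prop) : ℕ :=
  ((univ.powersetCard 4).filter (fun s => HasCycle4 r s)).card

open Classical in
/-- `T4(T)`: number of 4-element vertex subsets spanning a transitive subtournament. -/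
noncomputable def trans4Count {n : ℕ} (r : Fin n → Fin n → Prop) : ℕ :=
  ((univ.powersetCard 4).filter (fun s => IsTrans4 r s)).card


/-! ### Auxiliary machinery -/

private def rel6 (p q s t u v : Bool) : Fin 4 → Fin 4 → Prop := fun i j =>
  ![![false, p, q, s], ![!p, false, t, u], ![!q, !t, false, v], ![!s, !u, !v, false]] i j = true

private instance (p q s t u v : Bool) (w : Finset (Fin 4)) :
    Decidable (IsCyclicTriple (rel6 p q s t u v) w) := by
  unfold IsCyclicTriple rel6; infer_instance
private instance (p q s t u v : Bool) (w : Finset (Fin 4)) :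
    Decidable (IsTrans4 (rel6 p q s t u v) w) := by
  unfold IsTrans4 rel6; infer_instance
private instance (p q s t u v : Bool) (w : Finset (Fin 4)) :
    Decidable (HasCycle4 (rel6 p q s t u v) w) := by
  unfold HasCycle4 rel6; infer_instance

set_option maxRecDepth 100000 in
set_option maxHeartbeats 4000000 in
private theorem key64 : ∀ p q s t u v : Bool,
    ((univ.powersetCard 3).filter (fun w => IsCyclicTriple (rel6 p q s t u v) w)).card
      + (if IsTrans4 (rel6 p q s t u v) (univ : Finset (Fin 4)) then 1 else 0)
    = 1 + (if HasCycle4 (rel6 p q s t u v) (univ : Finset (Fin 4)) then 1 else 0) := by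
  decide

private lemma ite_congr' (P : Prop) (h1 h2 : Decidable P) (a b : ℕ) :
    @ite _ P h1 a b = @ite _ P h2 a b := by
  have : h1 = h2 := Subsingleton.elim _ _
  rw [this]

private lemma filter_card_congr' {α : Type*} (p : α → Prop) (h1 h2 : DecidablePred p)
    (s : Finset α) : (@Finset.filter _ p h1 s).card = (@Finset.filter _ p h2 s).card := by
  have : h1 = h2 := funext fun a => Subsingleton.elim _ _
  rw [this]

private lemma flip_aux (P Q : Prop) [Decidable Q] (h : P ↔ ¬Q) : P ↔ ((!decide Q) = true) := by
  rw [h]; simp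

open Classical in
private lemma exists_rel6 (r : Fin 4 → Fin 4 → Prop) (hT : IsTournament r) :
    ∃ p q s t u v : Bool, r = rel6 p q s t u v := by
  refine ⟨decide (r 0 1), decide (r 0 2), decide (r 0 3), decide (r 1 2), decide (r 1 3),
    decide (r 2 3), ?_⟩
  have key : ∀ i j : Fin 4, i ≠ j → (r j i ↔ ¬ r i j) := by
    intro i j hij
    rcases hT.2 i j hij with ⟨h1, h2⟩ | ⟨h1, h2⟩ <;> tauto
  funext i j
  apply propext
  fin_cases i <;> fin_cases j <;> simp only [rel6] <;>
    first
      | exact iff_of_false (hT.1 _) (fun h => Bool.noConfusion h)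
      | exact ⟨fun h => decide_eq_true h, fun h => of_decide_eq_true h⟩
      | exact flip_aux _ _ (key _ _ (by decide))

open Classical in
private lemma key4 (r : Fin 4 → Fin 4 → Prop) (hT : IsTournament r) :
    ((univ.powersetCard 3).filter (fun w => IsCyclicTriple r w)).card
      + (if IsTrans4 r (univ : Finset (Fin 4)) then 1 else 0)
    = 1 + (if HasCycle4 r (univ : Finset (Fin 4)) then 1 else 0) := by
  obtain ⟨p, q, s, t, u, v, rfl⟩ := exists_rel6 r hT
  convert key64 p q s t u v using 2
  · exact filter_card_congr' _ _ _ _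
  · exact ite_congr' _ _ _ _ _
  · exact ite_congr' _ _ _ _ _

private lemma cyc_transfer {n : ℕ} (r : Fin n → Fin n → Prop) (g : Fin 4 → Fin n)
    (hg : Function.Injective g) (t : Finset (Fin 4)) :
    IsCyclicTriple (fun i j => r (g i) (g j)) t ↔ IsCyclicTriple r (t.image g) := by
  constructor
  · rintro ⟨x, y, z, hxy, hyz, hxz, rfl, h1, h2, h3⟩
    exact ⟨g x, g y, g z, fun h => hxy (hg h), fun h => hyz (hg h), fun h => hxz (hg h),
      by simp [Finset.image_insert], h1, h2, h3⟩
  · rintro ⟨x, y, z, hxy, hyz, hxz, hs, h1, h2, h3⟩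
    have hx : x ∈ t.image g := by rw [hs]; simp
    have hy : y ∈ t.image g := by rw [hs]; simp
    have hz : z ∈ t.image g := by rw [hs]; simp
    obtain ⟨i, -, rfl⟩ := Finset.mem_image.1 hx
    obtain ⟨j, -, rfl⟩ := Finset.mem_image.1 hy
    obtain ⟨k, -, rfl⟩ := Finset.mem_image.1 hz
    refine ⟨i, j, k, fun h => hxy (by rw [h]), fun h => hyz (by rw [h]), fun h => hxz (by rw [h]),
      Finset.image_injective hg ?_, h1, h2, h3⟩
    rw [hs]; simp [Finset.image_insert]

private lemma trans4_transfer {n : ℕ} (r : Fin n → Fin n → Prop) (g : Fin 4 → Fin n)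
    (hg : Function.Injective g) (t : Finset (Fin 4)) :
    IsTrans4 (fun i j => r (g i) (g j)) t ↔ IsTrans4 r (t.image g) := by
  constructor
  · rintro ⟨a, b, c, d, h1, h2, h3, h4, h5, h6, rfl, hr⟩
    exact ⟨g a, g b, g c, g d, fun h => h1 (hg h), fun h => h2 (hg h), fun h => h3 (hg h),
      fun h => h4 (hg h), fun h => h5 (hg h), fun h => h6 (hg h),
      by simp [Finset.image_insert], hr⟩
  · rintro ⟨a, b, c, d, h1, h2, h3, h4, h5, h6, hs, hr⟩
    have ha : a ∈ t.image g := by rw [hs]; simp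
    have hb : b ∈ t.image g := by rw [hs]; simp
    have hc : c ∈ t.image g := by rw [hs]; simp
    have hd : d ∈ t.image g := by rw [hs]; simp
    obtain ⟨i, -, rfl⟩ := Finset.mem_image.1 ha
    obtain ⟨j, -, rfl⟩ := Finset.mem_image.1 hb
    obtain ⟨k, -, rfl⟩ := Finset.mem_image.1 hc
    obtain ⟨l, -, rfl⟩ := Finset.mem_image.1 hd
    refine ⟨i, j, k, l, fun h => h1 (by rw [h]), fun h => h2 (by rw [h]), fun h => h3 (by rw [h]),
      fun h => h4 (by rw [h]), fun h => h5 (by rw [h]), fun h => h6 (by rw [h]),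
      Finset.image_injective hg ?_, hr⟩
    rw [hs]; simp [Finset.image_insert]

private lemma cyc4_transfer {n : ℕ} (r : Fin n → Fin n → Prop) (g : Fin 4 → Fin n)
    (hg : Function.Injective g) (t : Finset (Fin 4)) :
    HasCycle4 (fun i j => r (g i) (g j)) t ↔ HasCycle4 r (t.image g) := by
  constructor
  · rintro ⟨a, b, c, d, h1, h2, h3, h4, h5, h6, rfl, hr⟩
    exact ⟨g a, g b, g c, g d, fun h => h1 (hg h), fun h => h2 (hg h), fun h => h3 (hg h),
      fun h => h4 (hg h), fun h => h5 (hg h), fun h => h6 (hg h),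
      by simp [Finset.image_insert], hr⟩
  · rintro ⟨a, b, c, d, h1, h2, h3, h4, h5, h6, hs, hr⟩
    have ha : a ∈ t.image g := by rw [hs]; simp
    have hb : b ∈ t.image g := by rw [hs]; simp
    have hc : c ∈ t.image g := by rw [hs]; simp
    have hd : d ∈ t.image g := by rw [hs]; simp
    obtain ⟨i, -, rfl⟩ := Finset.mem_image.1 ha
    obtain ⟨j, -, rfl⟩ := Finset.mem_image.1 hb
    obtain ⟨k, -, rfl⟩ := Finset.mem_image.1 hc
    obtain ⟨l, -, rfl⟩ := Finset.mem_image.1 hd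
    refine ⟨i, j, k, l, fun h => h1 (by rw [h]), fun h => h2 (by rw [h]), fun h => h3 (by rw [h]),
      fun h => h4 (by rw [h]), fun h => h5 (by rw [h]), fun h => h6 (by rw [h]),
      Finset.image_injective hg ?_, hr⟩
    rw [hs]; simp [Finset.image_insert]

private lemma card_eq_four' {α : Type*} [DecidableEq α] {s : Finset α} (hs : s.card = 4) :
    ∃ a b c d : α, a ≠ b ∧ a ≠ c ∧ a ≠ d ∧ b ≠ c ∧ b ≠ d ∧ c ≠ d ∧ s = {a, b, c, d} := by
  obtain ⟨a, t, hat, rfl, ht⟩ := Finset.card_eq_succ.1 hs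
  obtain ⟨b, c, d, hbc, hbd, hcd, rfl⟩ := Finset.card_eq_three.1 ht
  simp only [Finset.mem_insert, Finset.mem_singleton, not_or] at hat
  exact ⟨a, b, c, d, hat.1, hat.2.1, hat.2.2, hbc, hbd, hcd, rfl⟩

open Classical in
private lemma perset {n : ℕ} (r : Fin n → Fin n → Prop) (hT : IsTournament r)
    (s : Finset (Fin n)) (hs : s.card = 4) :
    ((s.powersetCard 3).filter (fun t => IsCyclicTriple r t)).card
      + (if IsTrans4 r s then 1 else 0)
    = 1 + (if HasCycle4 r s then 1 else 0) := by
  obtain ⟨a, b, c, d, hab, hac, had, hbc, hbd, hcd, rfl⟩ := card_eq_four' hs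
  set g : Fin 4 → Fin n := ![a, b, c, d] with hgdef
  have hg : Function.Injective g := by
    intro i j hij
    fin_cases i <;> fin_cases j <;>
      first
        | rfl
        | exact absurd hij hab | exact absurd hij hac | exact absurd hij had
        | exact absurd hij hbc | exact absurd hij hbd | exact absurd hij hcd
        | exact absurd hij.symm hab | exact absurd hij.symm hac | exact absurd hij.symm had
        | exact absurd hij.symm hbc | exact absurd hij.symm hbd | exact absurd hij.symm hcd
  have himg : Finset.image g Finset.univ = ({a, b, c, d} : Finset (Fin n)) := by
    rw [show (Finset.univ : Finset (Fin 4)) = {0, 1, 2, 3} by decide]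
    simp only [Finset.image_insert, Finset.image_singleton]
    rfl
  set r' : Fin 4 → Fin 4 → Prop := fun i j => r (g i) (g j) with hr'
  have hT' : IsTournament r' :=
    ⟨fun i => hT.1 _, fun i j hij => hT.2 _ _ (fun h => hij (hg h))⟩
  have hk : ((Finset.univ.powersetCard 3).filter (fun w => IsCyclicTriple r' w)).card
      = ((({a,b,c,d} : Finset (Fin n)).powersetCard 3).filter
          (fun t => IsCyclicTriple r t)).card := by
    apply Finset.card_bij (fun t _ => t.image g)
    · intro t ht
      simp only [Finset.mem_filter, Finset.mem_powersetCard] at ht ⊢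
      refine ⟨⟨?_, ?_⟩, ?_⟩
      · rw [← himg]; exact Finset.image_subset_image ht.1.1
      · rw [Finset.card_image_of_injective _ hg]; exact ht.1.2
      · exact (cyc_transfer r g hg t).1 ht.2
    · intro t1 h1 t2 h2 h
      exact Finset.image_injective hg h
    · intro t ht
      simp only [Finset.mem_filter, Finset.mem_powersetCard] at ht
      obtain ⟨⟨hts, htc⟩, htcyc⟩ := ht
      rw [← himg] at hts
      obtain ⟨t', ht'u, rfl⟩ := Finset.subset_image_iff.1 hts
      refine ⟨t', ?_, rfl⟩
      simp only [Finset.mem_filter, Finset.mem_powersetCard]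
      rw [Finset.card_image_of_injective _ hg] at htc
      exact ⟨⟨Finset.subset_univ _, htc⟩, (cyc_transfer r g hg t').2 htcyc⟩
  have htr : IsTrans4 r ({a,b,c,d} : Finset (Fin n)) ↔ IsTrans4 r' Finset.univ := by
    rw [trans4_transfer r g hg, himg]
  have hcy : HasCycle4 r ({a,b,c,d} : Finset (Fin n)) ↔ HasCycle4 r' Finset.univ := by
    rw [cyc4_transfer r g hg, himg]
  have h1 : (if IsTrans4 r ({a,b,c,d} : Finset (Fin n)) then 1 else 0 : ℕ)
      = if IsTrans4 r' Finset.univ then 1 else 0 := by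
    by_cases h : IsTrans4 r' Finset.univ
    · rw [if_pos h, if_pos (htr.mpr h)]
    · rw [if_neg h, if_neg (fun hh => h (htr.mp hh))]
  have h2 : (if HasCycle4 r ({a,b,c,d} : Finset (Fin n)) then 1 else 0 : ℕ)
      = if HasCycle4 r' Finset.univ then 1 else 0 := by
    by_cases h : HasCycle4 r' Finset.univ
    · rw [if_pos h, if_pos (hcy.mpr h)]
    · rw [if_neg h, if_neg (fun hh => h (hcy.mp hh))]
  rw [← hk, h1, h2]
  exact key4 r' hT'

open Classical in
private lemma main_nat {n : ℕ} (r : Fin n → Fin n → Prop) (hT : IsTournament r) :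
    trans4Count r + cyc3Count r * (n - 3) = n.choose 4 + cyc4Count r := by
  classical
  set P4 := (univ : Finset (Fin n)).powersetCard 4 with hP4
  set C3 := ((univ : Finset (Fin n)).powersetCard 3).filter (fun t => IsCyclicTriple r t)
    with hC3
  have hsum : ∑ s ∈ P4, (((s.powersetCard 3).filter (fun t => IsCyclicTriple r t)).card
        + (if IsTrans4 r s then 1 else 0))
      = ∑ s ∈ P4, (1 + (if HasCycle4 r s then 1 else 0)) :=
    Finset.sum_congr rfl fun s hs => perset r hT s (Finset.mem_powersetCard.1 hs).2
  rw [Finset.sum_add_distrib, Finset.sum_add_distrib] at hsum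
  have hT4 : ∑ s ∈ P4, (if IsTrans4 r s then 1 else 0) = trans4Count r := by
    unfold trans4Count
    rw [Finset.card_filter]
  have hC4 : ∑ s ∈ P4, (if HasCycle4 r s then 1 else 0) = cyc4Count r := by
    unfold cyc4Count
    rw [Finset.card_filter]
  have hone : ∑ _s ∈ P4, (1 : ℕ) = n.choose 4 := by
    rw [Finset.sum_const, smul_eq_mul, mul_one, hP4, Finset.card_powersetCard,
      Finset.card_univ, Fintype.card_fin]
  have hks : ∀ s ∈ P4, ((s.powersetCard 3).filter (fun t => IsCyclicTriple r t)).card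
      = ∑ t ∈ C3, (if t ⊆ s then 1 else 0) := by
    intro s _
    rw [← Finset.card_filter]
    congr 1
    apply Finset.ext
    intro t
    simp only [hC3, Finset.mem_filter, Finset.mem_powersetCard]
    have := Finset.subset_univ t
    tauto
  have hfib : ∀ t ∈ C3, ∑ s ∈ P4, (if t ⊆ s then 1 else 0) = n - 3 := by
    intro t ht
    have htc : t.card = 3 := (Finset.mem_powersetCard.1 (Finset.mem_filter.1 ht).1).2
    rw [← Finset.card_filter]
    have hcompl : (Finset.univ \ t).card = n - 3 := by
      rw [Finset.card_sdiff_of_subset (Finset.subset_univ t), htc, Finset.card_univ, Fintype.card_fin]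
    rw [← hcompl]
    apply (Finset.card_bij (fun v _ => insert v t) ?_ ?_ ?_).symm
    · intro v hv
      simp only [Finset.mem_sdiff, Finset.mem_univ, true_and] at hv
      simp only [Finset.mem_filter, Finset.mem_powersetCard, hP4]
      exact ⟨⟨Finset.subset_univ _, by rw [Finset.card_insert_of_notMem hv, htc]⟩,
        Finset.subset_insert _ _⟩
    · intro v1 h1 v2 h2 h
      simp only [Finset.mem_sdiff, Finset.mem_univ, true_and] at h1 h2
      have hm := Finset.mem_insert_self v1 t
      rw [show insert v1 t = insert v2 t from h] at hm
      rcases Finset.mem_insert.1 hm with h' | h'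
      · exact h'
      · exact absurd h' h1
    · intro s hs
      simp only [Finset.mem_filter, Finset.mem_powersetCard, hP4] at hs
      obtain ⟨⟨_, hsc⟩, hts⟩ := hs
      have hcd : (s \ t).card = 1 := by rw [Finset.card_sdiff_of_subset hts, hsc, htc]
      obtain ⟨v, hv⟩ := Finset.card_eq_one.1 hcd
      refine ⟨v, ?_, ?_⟩
      · simp only [Finset.mem_sdiff, Finset.mem_univ, true_and]
        have : v ∈ s \ t := hv ▸ Finset.mem_singleton_self v
        exact (Finset.mem_sdiff.1 this).2
      · show insert v t = s
        rw [Finset.insert_eq, ← hv, Finset.sdiff_union_of_subset hts]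
  have hkk : ∑ s ∈ P4, ((s.powersetCard 3).filter (fun t => IsCyclicTriple r t)).card
      = cyc3Count r * (n - 3) := by
    rw [Finset.sum_congr rfl hks, Finset.sum_comm, Finset.sum_congr rfl hfib,
      Finset.sum_const, smul_eq_mul]
    congr 1
  omega


/-- `T4(T) − C4(T) = C(n,4) − (n−3)·C3(T)` (stated additively over ℕ),
and in density form `t4(T) − c4(T) = 1 − 4·c3(T)`. -/
theorem stmt_0 {n : ℕ} (hn : 4 ≤ n) (r : Fin n → Fin n → Prop) (hT : IsTournament r) :
    trans4Count r + (n - 3) * cyc3Count r = n.choose 4 + cyc4Count r ∧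
    (trans4Count r : ℝ) / (n.choose 4 : ℝ) - (cyc4Count r : ℝ) / (n.choose 4 : ℝ) =
      1 - 4 * ((cyc3Count r : ℝ) / (n.choose 3 : ℝ)) := by
  have hnat := main_nat r hT
  constructor
  · rw [Nat.mul_comm]; exact hnat
  · have h4pos : (0:ℝ) < (n.choose 4 : ℝ) := by exact_mod_cast Nat.choose_pos hn
    have h3pos : (0:ℝ) < (n.choose 3 : ℝ) := by exact_mod_cast Nat.choose_pos (by omega : 3 ≤ n)
    have h3le : 3 ≤ n := by omega
    have hrel : (n.choose 4 : ℝ) * 4 = (n.choose 3 : ℝ) * ((n:ℝ) - 3) := by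
      have h := congrArg (Nat.cast : ℕ → ℝ) (Nat.choose_succ_right_eq n 3)
      push_cast [Nat.cast_sub h3le] at h
      linarith [h]
    have hnatR : (trans4Count r : ℝ) + (cyc3Count r : ℝ) * ((n:ℝ) - 3)
        = (n.choose 4 : ℝ) + (cyc4Count r : ℝ) := by
      have h := congrArg (Nat.cast : ℕ → ℝ) hnat
      push_cast [Nat.cast_sub h3le] at h
      linarith [h]
    field_simp
    nlinarith [hnatR, hrel, mul_pos h4pos h3pos]
end

section
/- Let T be a tournament on n ≥ 4 vertices. Let C3(T) denote the number of 3-element vertex subsets spanning a cyclic triangle and C4(T) the number of 4-element vertex subsets whose induced subtournament contains a directed 4-cycle. Then 2·C4(T) ≤ (n−3)·C3(T). In particular, in density form, c4(T) ≤ 2·c3(T), where c3(T) = C3(T)/C(n,3) and c4(T) = C4(T)/C(n,4). -/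
/-!
Double counting of pairs (cyclic triangle, 4-set containing it). In a tournament the two chords
`ac`, `bd` of a directed 4-cycle `a → b → c → d → a` are oriented somehow, and each chord closes a
cyclic triangle with one of the remaining vertices, so every 4-set with a 4-cycle contains at
least two cyclic triangles. Conversely, a triangle lies in only `n - 3` four-sets.
The density form follows from `4 C(n,4) = (n - 3) C(n,3)`.
-/

open Finset

lemma IsTournament.rel_or_rel {n : ℕ} {r : Fin n → Fin n → Prop} (hT : IsTournament r)
    {x y : Fin n} (hxy : x ≠ y) : r x y ∨ r y x :=
  (hT.2 x y hxy).imp And.left And.left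

lemma IsCyclicTriple.card_eq_three {n : ℕ} {r : Fin n → Fin n → Prop} {t : Finset (Fin n)}
    (ht : IsCyclicTriple r t) : #t = 3 := by
  obtain ⟨x, y, z, hxy, hyz, hxz, rfl, -⟩ := ht
  exact Finset.card_eq_three.2 ⟨x, y, z, hxy, hxz, hyz, rfl⟩

lemma exists_cyclicTriple_of_cycle4 {n : ℕ} {r : Fin n → Fin n → Prop} {a b c d : Fin n}
    (hab : a ≠ b) (hac : a ≠ c) (had : a ≠ d) (hbc : b ≠ c) (hcd : c ≠ d)
    (rab : r a b) (rbc : r b c) (rcd : r c d) (rda : r d a) (hchord : r a c ∨ r c a) :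
    ∃ t, IsCyclicTriple r t ∧ a ∈ t ∧ c ∈ t ∧ t ⊆ {a, b, c, d} := by
  rcases hchord with rac | rca
  · refine ⟨{a, c, d}, ⟨a, c, d, hac, hcd, had, rfl, rac, rcd, rda⟩, by simp, by simp, ?_⟩
    intro x; simp only [mem_insert, mem_singleton]; tauto
  · refine ⟨{a, b, c}, ⟨a, b, c, hab, hbc, hac, rfl, rab, rbc, rca⟩, by simp, by simp, ?_⟩
    intro x; simp only [mem_insert, mem_singleton]; tauto

/-- One cyclic triangle contains the chord `ac`, the other the chord `bd`, and no triple
contains all four vertices. -/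
lemma HasCycle4.exists_two_cyclicTriples {n : ℕ} {r : Fin n → Fin n → Prop}
    (hT : IsTournament r) {s : Finset (Fin n)} (hs : HasCycle4 r s) :
    ∃ t₁ t₂, t₁ ≠ t₂ ∧ IsCyclicTriple r t₁ ∧ IsCyclicTriple r t₂ ∧ t₁ ⊆ s ∧ t₂ ⊆ s := by
  obtain ⟨a, b, c, d, hab, hac, had, hbc, hbd, hcd, rfl, rab, rbc, rcd, rda⟩ := hs
  obtain ⟨t₁, ht₁, ha, hc, hs₁⟩ :=
    exists_cyclicTriple_of_cycle4 hab hac had hbc hcd rab rbc rcd rda (hT.rel_or_rel hac)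
  obtain ⟨t₂, ht₂, hb, hd, hs₂⟩ :=
    exists_cyclicTriple_of_cycle4 hbc hbd hab.symm hcd had.symm rbc rcd rda rab
      (hT.rel_or_rel hbd)
  have hrot : ({b, c, d, a} : Finset (Fin n)) = {a, b, c, d} := by
    ext x; simp only [mem_insert, mem_singleton]; tauto
  refine ⟨t₁, t₂, ?_, ht₁, ht₂, hs₁, hrot ▸ hs₂⟩
  rintro rfl
  have hsub : ({a, b, c, d} : Finset (Fin n)) ⊆ t₁ := by
    intro x; simp only [mem_insert, mem_singleton]; rintro (rfl | rfl | rfl | rfl) <;> assumption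
  have h4 : #({a, b, c, d} : Finset (Fin n)) = 4 :=
    card_eq_four.2 ⟨a, b, c, d, hab, hac, had, hbc, hbd, hcd, rfl⟩
  have := card_le_card hsub
  rw [h4, ht₁.card_eq_three] at this
  omega

lemma card_filter_superset_le {α : Type*} [Fintype α] [DecidableEq α] (t : Finset α) :
    #{s ∈ powersetCard (#t + 1) univ | t ⊆ s} ≤ Fintype.card α - #t := by
  have hsub : {s ∈ powersetCard (#t + 1) (univ : Finset α) | t ⊆ s} ⊆ tᶜ.image (insert · t) := by
    intro s hs
    obtain ⟨hs, hts⟩ := mem_filter.1 hs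
    obtain ⟨x, hx⟩ : ∃ x, s \ t = {x} :=
      card_eq_one.1 (by rw [card_sdiff_of_subset hts, (mem_powersetCard.1 hs).2]; omega)
    have hxs : x ∈ s \ t := hx ▸ mem_singleton_self x
    refine mem_image.2 ⟨x, mem_compl.2 (mem_sdiff.1 hxs).2, ?_⟩
    rw [← sdiff_union_of_subset hts, hx, insert_eq]
  calc #{s ∈ powersetCard (#t + 1) univ | t ⊆ s} ≤ #(tᶜ.image (insert · t)) := card_le_card hsub
    _ ≤ #tᶜ := card_image_le
    _ = Fintype.card α - #t := card_compl t

lemma two_mul_cyc4Count_le {n : ℕ} (r : Fin n → Fin n → Prop) (hT : IsTournament r) :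
    2 * cyc4Count r ≤ (n - 3) * cyc3Count r := by
  classical
  rw [mul_comm, mul_comm (n - 3)]
  refine card_mul_le_card_mul (fun (s t : Finset (Fin n)) => t ⊆ s) ?_ ?_
  · intro s hs
    obtain ⟨t₁, t₂, hne, ht₁, ht₂, hs₁, hs₂⟩ := (mem_filter.1 hs).2.exists_two_cyclicTriples hT
    refine one_lt_card.2 ⟨t₁, ?_, t₂, ?_, hne⟩ <;>
      simp only [bipartiteAbove, mem_filter, mem_powersetCard, subset_univ, true_and]
    exacts [⟨⟨ht₁.card_eq_three, ht₁⟩, hs₁⟩, ⟨⟨ht₂.card_eq_three, ht₂⟩, hs₂⟩]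
  · intro t ht
    have ht3 : #t = 3 := (mem_powersetCard.1 (mem_filter.1 ht).1).2
    calc #(bipartiteBelow (fun s t => t ⊆ s) _ t)
        ≤ #{s ∈ powersetCard (#t + 1) univ | t ⊆ s} := card_le_card fun s hs => by
          simp only [bipartiteBelow, mem_filter] at hs ⊢
          exact ⟨ht3 ▸ hs.1.1, hs.2⟩
      _ ≤ n - 3 := by simpa [ht3] using card_filter_superset_le t

lemma div_choose_four_le_two_mul_div_choose_three {n c₃ c₄ : ℕ}
    (h : 2 * c₄ ≤ (n - 3) * c₃) :
    (c₄ : ℝ) / (n.choose 4 : ℝ) ≤ 2 * ((c₃ : ℝ) / (n.choose 3 : ℝ)) := by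
  rcases Nat.lt_or_ge n 4 with hn | hn
  · rw [Nat.choose_eq_zero_of_lt hn, Nat.cast_zero, div_zero]
    positivity
  have hc₃ : (0 : ℝ) < n.choose 3 := by exact_mod_cast Nat.choose_pos (by omega)
  have hc₄ : (0 : ℝ) < n.choose 4 := by exact_mod_cast Nat.choose_pos hn
  have hid : (n.choose 4 : ℝ) * 4 = n.choose 3 * ((n - 3 : ℕ) : ℝ) := by
    exact_mod_cast Nat.choose_succ_right_eq n 3
  have h' : 2 * (c₄ : ℝ) ≤ ((n - 3 : ℕ) : ℝ) * c₃ := by exact_mod_cast h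
  rw [← mul_div_assoc, div_le_div_iff₀ hc₄ hc₃]
  nlinarith

theorem stmt_1_general {n : ℕ} (r : Fin n → Fin n → Prop) (hT : IsTournament r) :
    2 * cyc4Count r ≤ (n - 3) * cyc3Count r ∧
    (cyc4Count r : ℝ) / (n.choose 4 : ℝ) ≤ 2 * ((cyc3Count r : ℝ) / (n.choose 3 : ℝ)) := by
  have h := two_mul_cyc4Count_le r hT
  exact ⟨h, div_choose_four_le_two_mul_div_choose_three h⟩

/-- `2·C4(T) ≤ (n−3)·C3(T)`, and in density form `c4(T) ≤ 2·c3(T)`. -/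
theorem stmt_1 {n : ℕ} (hn : 4 ≤ n) (r : Fin n → Fin n → Prop) (hT : IsTournament r) :
    2 * cyc4Count r ≤ (n - 3) * cyc3Count r ∧
    (cyc4Count r : ℝ) / (n.choose 4 : ℝ) ≤ 2 * ((cyc3Count r : ℝ) / (n.choose 3 : ℝ)) :=
  stmt_1_general r hT
end

section
/- Let T be a tournament on n ≥ 4 vertices. Let C3(T) denote the number of 3-element vertex subsets spanning a cyclic triangle and T4(T) the number of 4-element vertex subsets spanning a transitive subtournament. Then 2·T4(T) ≤ 2·C(n,4) − (n−3)·C3(T). In particular, in density form, t4(T) ≤ 2·t3(T) − 1, where t3(T) = 1 − C3(T)/C(n,3) is the density of transitive triples and t4(T) = T4(T)/C(n,4). -/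
open Finset

/-!
A 3-set is transitive iff it has a source, and the source is unique, so a vertex of out-degree
`d` inside a 4-set is the source of exactly `C(d, 2)` transitive triples there. The out-degrees
in a 4-set add up to `6` and `C(d, 2) ≥ d - 1`, so every 4-set has at least two transitive
triples, i.e. at most two cyclic ones, and none if it is transitive. Hence
`2·[s transitive] + #(cyclic triples in s) ≤ 2` for every 4-set `s`; summing over `s` and
counting each cyclic triple once for each of its `n - 3` supersets of size 4 gives the bound,
and `4·C(n,4) = (n-3)·C(n,3)` turns it into the density form.
-/

theorem Nat.le_choose_two_add_one (d : ℕ) : d ≤ d.choose 2 + 1 := by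
  cases d with
  | zero => simp
  | succ e => rw [Nat.choose_succ_succ, Nat.choose_one_right]; omega

theorem Finset.card_filter_superset_powersetCard_succ {α : Type*} [Fintype α] [DecidableEq α]
    {t : Finset α} {k : ℕ} (ht : #t = k) :
    #((powersetCard (k + 1) univ).filter (t ⊆ ·)) = Fintype.card α - k := by
  have himage : (powersetCard (k + 1) univ).filter (t ⊆ ·) = tᶜ.image (insert · t) := by
    ext u
    simp only [mem_filter, mem_powersetCard, subset_univ, true_and, mem_image, mem_compl]
    rw [← ht, exists_eq_insert_iff, eq_comm, and_comm]
  rw [himage, card_image_of_injOn (insert_inj_on' t), card_compl, ht]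

section

open Classical

variable {n : ℕ} {r : Fin n → Fin n → Prop}

theorem IsCyclicTriple.exists_rel_to {t : Finset (Fin n)} (h : IsCyclicTriple r t)
    {v : Fin n} (hv : v ∈ t) : ∃ w ∈ t, r w v := by
  obtain ⟨x, y, z, -, -, -, rfl, hxy, hyz, hzx⟩ := h
  simp only [mem_insert, mem_singleton] at hv
  rcases hv with rfl | rfl | rfl
  · exact ⟨z, by simp, hzx⟩
  · exact ⟨x, by simp, hxy⟩
  · exact ⟨y, by simp, hyz⟩

theorem sum_card_filter_isCyclicTriple_powersetCard_four :
    ∑ s ∈ powersetCard 4 univ, #((powersetCard 3 s).filter (IsCyclicTriple r ·)) =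
      (n - 3) * cyc3Count r := by
  set C := (powersetCard 3 (univ : Finset (Fin n))).filter (IsCyclicTriple r ·)
  have hfiber : ∀ s ∈ powersetCard 4 univ,
      #((powersetCard 3 s).filter (IsCyclicTriple r ·)) = #(C.bipartiteBelow (· ⊆ ·) s) := by
    intro s _
    congr 1; ext t
    simp only [C, bipartiteBelow, mem_filter, mem_powersetCard, subset_univ, true_and]
    tauto
  have hsupersets : ∀ t ∈ C, #((powersetCard 4 univ).bipartiteAbove (· ⊆ ·) t) = n - 3 := by
    intro t ht
    have := card_filter_superset_powersetCard_succ (mem_powersetCard.1 (mem_filter.1 ht).1).2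
    rwa [Fintype.card_fin] at this
  rw [sum_congr rfl hfiber, ← sum_card_bipartiteAbove_eq_sum_card_bipartiteBelow,
    sum_congr rfl hsupersets, sum_const, smul_eq_mul, mul_comm, cyc3Count]

end

namespace IsTournament

open Classical

variable {n : ℕ} {r : Fin n → Fin n → Prop}

theorem asymm (hT : IsTournament r) {x y : Fin n} (h : r x y) : ¬ r y x := by
  rcases eq_or_ne x y with rfl | hxy
  · exact hT.1 x
  · rcases hT.2 x y hxy with ⟨-, h'⟩ | ⟨-, h'⟩
    · exact h'
    · exact absurd h h'

theorem rel_of_not_rel (hT : IsTournament r) {x y : Fin n} (hxy : x ≠ y) (h : ¬ r x y) :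
    r y x := by
  rcases hT.2 x y hxy with ⟨h', -⟩ | ⟨h', -⟩
  · exact absurd h' h
  · exact h'

theorem not_isCyclicTriple_of_dominates (hT : IsTournament r) {t : Finset (Fin n)} {v : Fin n}
    (hv : v ∈ t) (hdom : ∀ w ∈ t, w ≠ v → r v w) : ¬ IsCyclicTriple r t := fun h => by
  obtain ⟨w, hw, hwv⟩ := h.exists_rel_to hv
  have hne : w ≠ v := by rintro rfl; exact hT.1 w hwv
  exact hT.asymm hwv (hdom w hw hne)

theorem sum_card_filter_rel (hT : IsTournament r) (s : Finset (Fin n)) :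
    ∑ v ∈ s, #(s.filter (r v ·)) = (#s).choose 2 := by
  have hout_in : ∀ v ∈ s, #(s.filter (r v ·)) + #(s.filter (r · v)) = #s - 1 := by
    intro v hv
    rw [← card_erase_of_mem hv, ← card_filter_add_card_filter_not (s := s.erase v) (r v ·)]
    congr 1
    · congr 1; ext w; simp only [mem_filter, mem_erase]
      exact ⟨fun ⟨hw, hvw⟩ => ⟨⟨by rintro rfl; exact hT.1 w hvw, hw⟩, hvw⟩,
        fun ⟨⟨_, hw⟩, hvw⟩ => ⟨hw, hvw⟩⟩
    · congr 1; ext w; simp only [mem_filter, mem_erase]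
      constructor
      · rintro ⟨hw, hwv⟩
        exact ⟨⟨by rintro rfl; exact hT.1 w hwv, hw⟩, hT.asymm hwv⟩
      · rintro ⟨⟨hwv, hw⟩, h⟩
        exact ⟨hw, hT.rel_of_not_rel hwv.symm h⟩
  have hswap : ∑ v ∈ s, #(s.filter (r v ·)) = ∑ v ∈ s, #(s.filter (r · v)) :=
    sum_card_bipartiteAbove_eq_sum_card_bipartiteBelow (s := s) (t := s) (r := r)
  have htotal := sum_congr rfl hout_in
  rw [sum_add_distrib, ← hswap, sum_const, smul_eq_mul] at htotal
  rw [Nat.choose_two_right, ← htotal]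
  omega

theorem sum_choose_two_card_filter_rel_le (hT : IsTournament r) (s : Finset (Fin n)) :
    ∑ v ∈ s, (#(s.filter (r v ·))).choose 2 ≤
      #((powersetCard 3 s).filter (¬ IsCyclicTriple r ·)) := by
  set T : Fin n → Finset (Finset (Fin n)) :=
    fun v => (powersetCard 2 (s.filter (r v ·))).image (insert v)
  have hnotMem : ∀ v, ∀ p ∈ powersetCard 2 (s.filter (r v ·)), v ∉ p :=
    fun v p hp hvp => hT.1 v (mem_filter.1 ((mem_powersetCard.1 hp).1 hvp)).2
  have hcard : ∀ v ∈ s, #(T v) = (#(s.filter (r v ·))).choose 2 := by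
    intro v _
    rw [card_image_of_injOn, card_powersetCard]
    intro p hp q hq hpq
    rw [← erase_insert (hnotMem v p hp), ← erase_insert (hnotMem v q hq)]
    exact congrArg (·.erase v) hpq
  have hdom : ∀ v, ∀ t ∈ T v, v ∈ t ∧ ∀ w ∈ t, w ≠ v → r v w := by
    intro v t ht
    obtain ⟨p, hp, rfl⟩ := mem_image.1 ht
    refine ⟨mem_insert_self v p, fun w hw hwv => ?_⟩
    obtain hw | hw := mem_insert.1 hw
    · exact absurd hw hwv
    · exact (mem_filter.1 ((mem_powersetCard.1 hp).1 hw)).2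
  have hdisj : (s : Set (Fin n)).PairwiseDisjoint T := by
    intro v _ w _ hvw
    exact disjoint_left.2 fun t htv htw =>
      hT.asymm ((hdom v t htv).2 w (hdom w t htw).1 hvw.symm)
        ((hdom w t htw).2 v (hdom v t htv).1 hvw)
  have hsub : s.biUnion T ⊆ (powersetCard 3 s).filter (¬ IsCyclicTriple r ·) := by
    intro t ht
    obtain ⟨v, hvs, htv⟩ := mem_biUnion.1 ht
    obtain ⟨hvt, hvdom⟩ := hdom v t htv
    refine mem_filter.2
      ⟨mem_powersetCard.2 ⟨?_, ?_⟩, hT.not_isCyclicTriple_of_dominates hvt hvdom⟩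
    · obtain ⟨p, hp, rfl⟩ := mem_image.1 htv
      exact insert_subset hvs ((mem_powersetCard.1 hp).1.trans (filter_subset _ _))
    · obtain ⟨p, hp, rfl⟩ := mem_image.1 htv
      rw [card_insert_of_notMem (hnotMem v p hp), (mem_powersetCard.1 hp).2]
  calc ∑ v ∈ s, (#(s.filter (r v ·))).choose 2
    _ = ∑ v ∈ s, #(T v) := (sum_congr rfl hcard).symm
    _ = #(s.biUnion T) := (card_biUnion hdisj).symm
    _ ≤ _ := card_le_card hsub

theorem card_filter_isCyclicTriple_le_two (hT : IsTournament r) {s : Finset (Fin n)}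
    (hs : #s = 4) : #((powersetCard 3 s).filter (IsCyclicTriple r ·)) ≤ 2 := by
  have hsplit := card_filter_add_card_filter_not (s := powersetCard 3 s) (IsCyclicTriple r ·)
  rw [card_powersetCard, hs] at hsplit
  have hdeg := hT.sum_card_filter_rel s
  have hlow := hT.sum_choose_two_card_filter_rel_le s
  have hconvex :
      ∑ v ∈ s, #(s.filter (r v ·)) ≤ ∑ v ∈ s, ((#(s.filter (r v ·))).choose 2 + 1) :=
    sum_le_sum fun v _ => Nat.le_choose_two_add_one _
  rw [sum_add_distrib, sum_const, smul_eq_mul, mul_one, hdeg, hs] at hconvex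
  have h43 : (4 : ℕ).choose 3 = 4 := rfl
  have h42 : (4 : ℕ).choose 2 = 6 := rfl
  omega

theorem card_filter_isCyclicTriple_eq_zero_of_isTrans4 (hT : IsTournament r) {s : Finset (Fin n)}
    (h : IsTrans4 r s) : #((powersetCard 3 s).filter (IsCyclicTriple r ·)) = 0 := by
  obtain ⟨a, b, c, d, -, -, -, -, -, -, rfl, rab, rac, rad, rbc, rbd, rcd⟩ := h
  rw [card_eq_zero, filter_eq_empty_iff]
  intro t ht hcyc
  obtain ⟨hts, ht3⟩ := mem_powersetCard.1 ht
  -- `a` dominates `{a, b, c, d}` and `b` dominates `{b, c, d}`, so neither lies on a cyclic triple.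
  have ha : a ∉ t := fun ha => hT.not_isCyclicTriple_of_dominates ha (fun w hw hwa => by
    have := hts hw; simp only [mem_insert, mem_singleton] at this
    rcases this with rfl | rfl | rfl | rfl <;> first | exact absurd rfl hwa | assumption) hcyc
  have hb : b ∉ t := fun hb => hT.not_isCyclicTriple_of_dominates hb (fun w hw hwb => by
    have := hts hw; simp only [mem_insert, mem_singleton] at this
    rcases this with rfl | rfl | rfl | rfl
    · exact absurd hw ha
    all_goals first | exact absurd rfl hwb | assumption) hcyc
  have htcd : t ⊆ {c, d} := fun w hw => by
    have := hts hw; simp only [mem_insert, mem_singleton] at this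
    rcases this with rfl | rfl | rfl | rfl
    · exact absurd hw ha
    · exact absurd hw hb
    all_goals simp
  have := (card_le_card htcd).trans (card_le_two (a := c) (b := d))
  omega

theorem two_mul_ite_isTrans4_add_card_le_two (hT : IsTournament r) {s : Finset (Fin n)}
    (hs : #s = 4) :
    2 * (if IsTrans4 r s then 1 else 0) +
      #((powersetCard 3 s).filter (IsCyclicTriple r ·)) ≤ 2 := by
  by_cases h : IsTrans4 r s
  · rw [if_pos h, hT.card_filter_isCyclicTriple_eq_zero_of_isTrans4 h]
  · rw [if_neg h, mul_zero, zero_add]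
    exact hT.card_filter_isCyclicTriple_le_two hs

theorem two_mul_trans4Count_add_le (hT : IsTournament r) :
    2 * trans4Count r + (n - 3) * cyc3Count r ≤ 2 * n.choose 4 := by
  rw [← sum_card_filter_isCyclicTriple_powersetCard_four, trans4Count, card_filter, mul_sum,
    ← sum_add_distrib]
  calc _ ≤ ∑ _s ∈ powersetCard 4 (univ : Finset (Fin n)), 2 :=
        sum_le_sum fun s hs => hT.two_mul_ite_isTrans4_add_card_le_two (mem_powersetCard.1 hs).2
    _ = 2 * n.choose 4 := by rw [sum_const, card_powersetCard, card_univ, Fintype.card_fin,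
        smul_eq_mul, mul_comm]

end IsTournament

theorem div_choose_four_le_of_two_mul_add_le {n T C : ℕ} (hn : 4 ≤ n)
    (h : 2 * T + (n - 3) * C ≤ 2 * n.choose 4) :
    (T : ℝ) / n.choose 4 ≤ 2 * (1 - (C : ℝ) / n.choose 3) - 1 := by
  have h4 : (0 : ℝ) < n.choose 4 := by exact_mod_cast Nat.choose_pos hn
  have h3 : (0 : ℝ) < n.choose 3 := by exact_mod_cast Nat.choose_pos (by omega)
  have hpascal : (n.choose 4 : ℝ) * 4 = n.choose 3 * ((n : ℝ) - 3) := by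
    have hsub : (n : ℝ) - 3 = ((n - 3 : ℕ) : ℝ) := by
      rw [Nat.cast_sub (by omega), Nat.cast_ofNat]
    rw [hsub]
    exact_mod_cast Nat.choose_succ_right_eq n 3
  have hreal : 2 * (T : ℝ) + ((n : ℝ) - 3) * C ≤ 2 * n.choose 4 := by
    have := (Nat.cast_le (α := ℝ)).2 h
    push_cast [Nat.cast_sub (by omega : 3 ≤ n)] at this
    exact this
  have hcyc : 2 * ((C : ℝ) / n.choose 3) = ((n : ℝ) - 3) * C / (2 * n.choose 4) := by
    field_simp
    linear_combination (C : ℝ) * hpascal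
  calc (T : ℝ) / n.choose 4 ≤ (2 * n.choose 4 - ((n : ℝ) - 3) * C) / (2 * n.choose 4) := by
        rw [div_le_div_iff₀ h4 (by positivity)]
        nlinarith
    _ = 2 * (1 - (C : ℝ) / n.choose 3) - 1 := by
        rw [mul_sub, hcyc]
        field_simp
        ring

/-- `2·T4(T) ≤ 2·C(n,4) − (n−3)·C3(T)` (stated additively over ℕ),
and in density form `t4(T) ≤ 2·t3(T) − 1` where `t3(T) = 1 − c3(T)`. -/
theorem stmt_2 {n : ℕ} (hn : 4 ≤ n) (r : Fin n → Fin n → Prop) (hT : IsTournament r) :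
    2 * trans4Count r + (n - 3) * cyc3Count r ≤ 2 * n.choose 4 ∧
    (trans4Count r : ℝ) / (n.choose 4 : ℝ) ≤
      2 * (1 - (cyc3Count r : ℝ) / (n.choose 3 : ℝ)) - 1 :=
  ⟨hT.two_mul_trans4Count_add_le,
    div_choose_four_le_of_two_mul_add_le hn hT.two_mul_trans4Count_add_le⟩
end

section
/- Every tournament on exactly 4 vertices contains at most two 3-element vertex subsets spanning a cyclic triangle. Moreover, it contains a directed 4-cycle through all four vertices if and only if the number of 3-element subsets spanning a cyclic triangle is exactly two; and in that case the two cyclic triangles share a common edge. -/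
open Finset

def TB (e01 e02 e03 e12 e13 e23 : Bool) : Fin 4 → Fin 4 → Prop :=
  fun x y =>
  (![![false, e01, e02, e03],
    ![!e01, false, e12, e13],
    ![!e02, !e12, false, e23],
    ![!e03, !e13, !e23, false]] x y) = true

instance (e01 e02 e03 e12 e13 e23 : Bool) (x y : Fin 4) :
    Decidable (TB e01 e02 e03 e12 e13 e23 x y) :=
  inferInstanceAs (Decidable (_ = true))

instance instDecCT (e01 e02 e03 e12 e13 e23 : Bool) :
    DecidablePred (IsCyclicTriple (TB e01 e02 e03 e12 e13 e23)) := fun s =>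
  inferInstanceAs (Decidable (∃ x y z : Fin 4, x ≠ y ∧ y ≠ z ∧ x ≠ z ∧
    s = {x, y, z} ∧ TB e01 e02 e03 e12 e13 e23 x y ∧ TB e01 e02 e03 e12 e13 e23 y z
    ∧ TB e01 e02 e03 e12 e13 e23 z x))

abbrev Pgoal (r : Fin 4 → Fin 4 → Prop) [DecidablePred (IsCyclicTriple r)] : Prop :=
    ((univ.powersetCard 3).filter (fun s => IsCyclicTriple r s)).card ≤ 2 ∧
    ((∃ a b c d : Fin 4, ({a, b, c, d} : Finset (Fin 4)) = univ ∧
        r a b ∧ r b c ∧ r c d ∧ r d a) ↔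
      ((univ.powersetCard 3).filter (fun s => IsCyclicTriple r s)).card = 2) ∧
    (((univ.powersetCard 3).filter (fun s => IsCyclicTriple r s)).card = 2 →
      ∀ s t : Finset (Fin 4), IsCyclicTriple r s → IsCyclicTriple r t → s ≠ t →
        (s ∩ t).card = 2)

lemma ite_tf_eq_true (p : Prop) [Decidable p] :
    ((if p then true else false) = true) ↔ p := by split_ifs with h <;> simp [h]

lemma not_ite_tf_eq_true (p : Prop) [Decidable p] :
    ((!(if p then true else false)) = true) ↔ ¬ p := by split_ifs with h <;> simp [h]

set_option maxHeartbeats 4000000 in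
lemma keyTB : ∀ e01 e02 e03 e12 e13 e23 : Bool, Pgoal (TB e01 e02 e03 e12 e13 e23) := by
  decide

/-- a 4-vertex tournament has at most two cyclic triangles; it has a
directed 4-cycle through all four vertices iff it has exactly two cyclic triangles;
and in that case the two cyclic triangles share an edge (their vertex sets meet in a
2-element set). -/
theorem stmt_5 (r : Fin 4 → Fin 4 → Prop) (hT : IsTournament r) :
    cyc3Count r ≤ 2 ∧
    ((∃ a b c d : Fin 4, ({a, b, c, d} : Finset (Fin 4)) = univ ∧
        r a b ∧ r b c ∧ r c d ∧ r d a) ↔ cyc3Count r = 2) ∧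
    (cyc3Count r = 2 →
      ∀ s t : Finset (Fin 4), IsCyclicTriple r s → IsCyclicTriple r t → s ≠ t →
        (s ∩ t).card = 2) := by
  classical
  have flip : ∀ x y : Fin 4, x ≠ y → (r y x ↔ ¬ r x y) := by
    intro x y h
    rcases hT.2 x y h with ⟨h1, h2⟩ | ⟨h1, h2⟩ <;> tauto
  have h01 := flip 0 1 (by decide)
  have h02 := flip 0 2 (by decide)
  have h03 := flip 0 3 (by decide)
  have h12 := flip 1 2 (by decide)
  have h13 := flip 1 3 (by decide)
  have h23 := flip 2 3 (by decide)
  have he : r = TB (if r 0 1 then true else false) (if r 0 2 then true else false)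
      (if r 0 3 then true else false) (if r 1 2 then true else false)
      (if r 1 3 then true else false) (if r 2 3 then true else false) := by
    funext x y
    apply propext
    fin_cases x <;> fin_cases y <;>
      simp [TB, ite_tf_eq_true, not_ite_tf_eq_true, hT.1, h01, h02, h03, h12, h13, h23]
  rw [he]
  have hc : ∀ e01 e02 e03 e12 e13 e23 : Bool, cyc3Count (TB e01 e02 e03 e12 e13 e23) =
      ((univ.powersetCard 3).filter
        (fun s => IsCyclicTriple (TB e01 e02 e03 e12 e13 e23) s)).card := by
    intro e01 e02 e03 e12 e13 e23
    unfold cyc3Count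
    congr 1
    exact Finset.filter_congr_decidable _ _ _
  rw [hc]
  exact keyTB _ _ _ _ _ _
end

section
/- Let T be a tournament on n ≥ 4 vertices. Then the number of unordered pairs of distinct 3-element vertex subsets that each span a cyclic triangle and whose vertex sets share exactly two vertices equals the number of 4-element vertex subsets whose induced subtournament contains a directed 4-cycle. Equivalently, if for each ordered edge e = (u→v) one writes a_e for the number of vertices w with {u,v,w} spanning a cyclic triangle, then Σ_e a_e(a_e−1) = 2·C4(T), where C4(T) is the number of 4-element subsets containing a directed 4-cycle. -/
open Finset

namespace Stmt6Aux

variable {n : ℕ} {r : Fin n → Fin n → Prop}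

lemma tour_asym (hT : IsTournament r) {a b : Fin n} (h : r a b) : ¬ r b a := by
  intro h'
  by_cases hab : a = b
  · exact hT.1 a (hab ▸ h)
  · rcases hT.2 a b hab with ⟨_, h2⟩ | ⟨_, h2⟩ <;> exact h2 (by assumption)

lemma tour_total (hT : IsTournament r) {a b : Fin n} (h : a ≠ b) : r a b ∨ r b a := by
  rcases hT.2 a b h with ⟨h1, _⟩ | ⟨h1, _⟩ <;> [exact Or.inl h1; exact Or.inr h1]

lemma card3 {x y z : Fin n} (hxy : x ≠ y) (hyz : y ≠ z) (hxz : x ≠ z) :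
    ({x, y, z} : Finset (Fin n)).card = 3 := by
  rw [card_insert_of_notMem (by simp [hxy, hxz]), card_insert_of_notMem (by simp [hyz]),
    card_singleton]

lemma card4 {a b c d : Fin n} (hab : a ≠ b) (hac : a ≠ c) (had : a ≠ d) (hbc : b ≠ c)
    (hbd : b ≠ d) (hcd : c ≠ d) : ({a, b, c, d} : Finset (Fin n)).card = 4 := by
  rw [card_insert_of_notMem (by simp [hab, hac, had]),
    card_insert_of_notMem (by simp [hbc, hbd]),
    card_insert_of_notMem (by simp [hcd]), card_singleton]

lemma cyc_card {s : Finset (Fin n)} (h : IsCyclicTriple r s) : s.card = 3 := by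
  obtain ⟨x, y, z, hxy, hyz, hxz, rfl, -⟩ := h
  exact card3 hxy hyz hxz

lemma cyc_intro {x y z : Fin n} (hxy : x ≠ y) (hyz : y ≠ z) (hxz : x ≠ z)
    (h1 : r x y) (h2 : r y z) (h3 : r z x) : IsCyclicTriple r {x, y, z} :=
  ⟨x, y, z, hxy, hyz, hxz, rfl, h1, h2, h3⟩

lemma cyc_shape (hT : IsTournament r) {u v w : Fin n} (huv : u ≠ v) (hvw : v ≠ w) (huw : u ≠ w)
    (h : IsCyclicTriple r {u, v, w}) (hr : r u v) : r v w ∧ r w u := by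
  obtain ⟨x, y, z, hxy, hyz, hxz, hs, rxy, ryz, rzx⟩ := h
  have hu : u = x ∨ u = y ∨ u = z := by
    have : u ∈ ({x,y,z} : Finset (Fin n)) := hs ▸ (by simp)
    simpa using this
  have hv : v = x ∨ v = y ∨ v = z := by
    have : v ∈ ({x,y,z} : Finset (Fin n)) := hs ▸ (by simp)
    simpa using this
  have hw : w = x ∨ w = y ∨ w = z := by
    have : w ∈ ({x,y,z} : Finset (Fin n)) := hs ▸ (by simp)
    simpa using this
  rcases hu with rfl | rfl | rfl <;> rcases hv with rfl | rfl | rfl <;>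
    rcases hw with rfl | rfl | rfl <;>
    first
      | exact absurd rfl huv
      | exact absurd rfl hvw
      | exact absurd rfl huw
      | exact absurd rfl hxy
      | exact absurd rfl hyz
      | exact absurd rfl hxz
      | exact ⟨by assumption, by assumption⟩
      | exact absurd hr (tour_asym hT (by assumption))

lemma not_cyc (hT : IsTournament r) {x y z : Fin n} (hxy : x ≠ y) (hyz : y ≠ z) (hxz : x ≠ z)
    (h1 : r x y) (h2 : r y z) (h3 : r x z) : ¬ IsCyclicTriple r {x, y, z} := fun h =>
  tour_asym hT h3 (cyc_shape hT hxy hyz hxz h h1).2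

lemma card3_distinct {x y z : Fin n} (h : ({x, y, z} : Finset (Fin n)).card = 3) :
    x ≠ y ∧ y ≠ z ∧ x ≠ z := by
  refine ⟨?_, ?_, ?_⟩ <;> rintro rfl
  · have hsub : ({x, x, z} : Finset (Fin n)) ⊆ {x, z} := by intro w; simp; try tauto
    have := card_le_card hsub
    have h2 := card_insert_le x ({z} : Finset (Fin n))
    simp at h2
    omega
  · have hsub : ({x, y, y} : Finset (Fin n)) ⊆ {x, y} := by intro w; simp; try tauto
    have := card_le_card hsub
    have h2 := card_insert_le x ({y} : Finset (Fin n))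
    simp at h2
    omega
  · have hsub : ({x, y, x} : Finset (Fin n)) ⊆ {x, y} := by intro w; simp; try tauto
    have := card_le_card hsub
    have h2 := card_insert_le x ({y} : Finset (Fin n))
    simp at h2
    omega

lemma pair_eq_pair' {α : Type*} [DecidableEq α] {a b c d : α} (hab : a ≠ b)
    (h : ({a, b} : Finset α) = {c, d}) : (a = c ∧ b = d) ∨ (a = d ∧ b = c) := by
  have ha : a ∈ ({c, d} : Finset α) := h ▸ (by simp)
  have hb : b ∈ ({c, d} : Finset α) := h ▸ (by simp)
  have hc : c ∈ ({a, b} : Finset α) := h ▸ (by simp)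
  simp only [mem_insert, mem_singleton] at ha hb hc
  rcases ha with rfl | rfl <;> rcases hb with rfl | rfl <;> tauto

lemma subsets3_of_4 {a b c d : Fin n} (hab : a ≠ b) (hac : a ≠ c) (had : a ≠ d) (hbc : b ≠ c)
    (hbd : b ≠ d) (hcd : c ≠ d) {s : Finset (Fin n)} (hs : s ⊆ {a, b, c, d})
    (hcard : s.card = 3) :
    s = {b, c, d} ∨ s = {a, c, d} ∨ s = {a, b, d} ∨ s = {a, b, c} := by
  have hu4 : ({a, b, c, d} : Finset (Fin n)).card = 4 := card4 hab hac had hbc hbd hcd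
  have h1 : (({a, b, c, d} : Finset (Fin n)) \ s).card = 1 := by
    rw [card_sdiff_of_subset hs, hu4, hcard]
  obtain ⟨m, hm⟩ := card_eq_one.mp h1
  have hseq : s = ({a, b, c, d} : Finset (Fin n)) \ {m} := by
    rw [← hm, sdiff_sdiff_self_left, inter_eq_right.mpr hs]
  have hmu : m ∈ ({a, b, c, d} : Finset (Fin n)) := by
    have : m ∈ ({a, b, c, d} : Finset (Fin n)) \ s := hm ▸ (by simp)
    exact (mem_sdiff.mp this).1
  simp only [mem_insert, mem_singleton] at hmu
  rcases hmu with rfl | rfl | rfl | rfl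
  · refine Or.inl ?_
    rw [hseq]; ext x; simp only [mem_sdiff, mem_insert, mem_singleton]; aesop
  · refine Or.inr (Or.inl ?_)
    rw [hseq]; ext x; simp only [mem_sdiff, mem_insert, mem_singleton]; aesop
  · refine Or.inr (Or.inr (Or.inl ?_))
    rw [hseq]; ext x; simp only [mem_sdiff, mem_insert, mem_singleton]; aesop
  · refine Or.inr (Or.inr (Or.inr ?_))
    rw [hseq]; ext x; simp only [mem_sdiff, mem_insert, mem_singleton]; aesop

lemma cyc4_pair (hT : IsTournament r) [DecidablePred (IsCyclicTriple r)] {u : Finset (Fin n)}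
    (h : HasCycle4 r u) :
    ∃ s t : Finset (Fin n), s ≠ t ∧
      (u.powersetCard 3).filter (fun s => IsCyclicTriple r s) = {s, t} := by
  obtain ⟨a, b, c, d, hab, hac, had, hbc, hbd, hcd, rfl, rab, rbc, rcd, rda⟩ := h
  have key : ∀ s t : Finset (Fin n), s ≠ t → s ⊆ {a,b,c,d} → t ⊆ {a,b,c,d} →
      s.card = 3 → t.card = 3 → IsCyclicTriple r s → IsCyclicTriple r t →
      (∀ s' , s' ⊆ ({a,b,c,d} : Finset (Fin n)) → s'.card = 3 → IsCyclicTriple r s' →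
        s' = s ∨ s' = t) →
      ∃ s t : Finset (Fin n), s ≠ t ∧
        (({a,b,c,d} : Finset (Fin n)).powersetCard 3).filter
          (fun s => IsCyclicTriple r s) = {s, t} := by
    intro s t hst hsu htu hsc htc hscyc htcyc huniq
    refine ⟨s, t, hst, ?_⟩
    ext s'
    simp only [mem_filter, mem_powersetCard, mem_insert, mem_singleton]
    constructor
    · rintro ⟨⟨h1, h2⟩, h3⟩; exact huniq s' h1 h2 h3
    · rintro (rfl | rfl)
      · exact ⟨⟨hsu, hsc⟩, hscyc⟩
      · exact ⟨⟨htu, htc⟩, htcyc⟩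
  rcases tour_total hT hac with rac | rca <;> rcases tour_total hT hbd with rbd | rdb
  · refine key {a,b,d} {a,c,d} ?_ (by intro x; simp; tauto) (by intro x; simp; tauto)
      (card3 hab hbd had) (card3 hac hcd had)
      (cyc_intro hab hbd had rab rbd rda) (cyc_intro hac hcd had rac rcd rda) ?_
    · intro hctr
      have : b ∈ ({a,c,d} : Finset (Fin n)) := hctr ▸ (by simp)
      simp only [mem_insert, mem_singleton] at this
      tauto
    · intro s' hsub hcard hcyc
      rcases subsets3_of_4 hab hac had hbc hbd hcd hsub hcard with rfl | rfl | rfl | rfl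
      · exact absurd hcyc (not_cyc hT hbc hcd hbd rbc rcd rbd)
      · exact Or.inr rfl
      · exact Or.inl rfl
      · exact absurd hcyc (not_cyc hT hab hbc hac rab rbc rac)
  · refine key {a,c,d} {b,c,d} ?_ (by intro x; simp; tauto) (by intro x; simp; tauto)
      (card3 hac hcd had) (card3 hbc hcd hbd)
      (cyc_intro hac hcd had rac rcd rda) (cyc_intro hbc hcd hbd rbc rcd rdb) ?_
    · intro hctr
      have : a ∈ ({b,c,d} : Finset (Fin n)) := hctr ▸ (by simp)
      simp only [mem_insert, mem_singleton] at this
      tauto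
    · intro s' hsub hcard hcyc
      rcases subsets3_of_4 hab hac had hbc hbd hcd hsub hcard with rfl | rfl | rfl | rfl
      · exact Or.inr rfl
      · exact Or.inl rfl
      · have hne : ¬ IsCyclicTriple r {d,a,b} :=
          not_cyc hT had.symm hab hbd.symm rda rab rdb
        refine absurd ?_ hne
        have : ({a,b,d} : Finset (Fin n)) = {d,a,b} := by ext x; simp; tauto
        rwa [this] at hcyc
      · exact absurd hcyc (not_cyc hT hab hbc hac rab rbc rac)
  · refine key {a,b,c} {a,b,d} ?_ (by intro x; simp; tauto) (by intro x; simp; tauto)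
      (card3 hab hbc hac) (card3 hab hbd had)
      (cyc_intro hab hbc hac rab rbc rca) (cyc_intro hab hbd had rab rbd rda) ?_
    · intro hctr
      have : c ∈ ({a,b,d} : Finset (Fin n)) := hctr ▸ (by simp)
      simp only [mem_insert, mem_singleton] at this
      tauto
    · intro s' hsub hcard hcyc
      rcases subsets3_of_4 hab hac had hbc hbd hcd hsub hcard with rfl | rfl | rfl | rfl
      · exact absurd hcyc (not_cyc hT hbc hcd hbd rbc rcd rbd)
      · have hne : ¬ IsCyclicTriple r {c,d,a} :=
          not_cyc hT hcd had.symm hac.symm rcd rda rca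
        refine absurd ?_ hne
        have : ({a,c,d} : Finset (Fin n)) = {c,d,a} := by ext x; simp; tauto
        rwa [this] at hcyc
      · exact Or.inr rfl
      · exact Or.inl rfl
  · refine key {a,b,c} {b,c,d} ?_ (by intro x; simp; tauto) (by intro x; simp; tauto)
      (card3 hab hbc hac) (card3 hbc hcd hbd)
      (cyc_intro hab hbc hac rab rbc rca) (cyc_intro hbc hcd hbd rbc rcd rdb) ?_
    · intro hctr
      have : a ∈ ({b,c,d} : Finset (Fin n)) := hctr ▸ (by simp)
      simp only [mem_insert, mem_singleton] at this
      tauto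
    · intro s' hsub hcard hcyc
      rcases subsets3_of_4 hab hac had hbc hbd hcd hsub hcard with rfl | rfl | rfl | rfl
      · exact Or.inr rfl
      · have hne : ¬ IsCyclicTriple r {c,d,a} :=
          not_cyc hT hcd had.symm hac.symm rcd rda rca
        refine absurd ?_ hne
        have : ({a,c,d} : Finset (Fin n)) = {c,d,a} := by ext x; simp; tauto
        rwa [this] at hcyc
      · have hne : ¬ IsCyclicTriple r {d,a,b} :=
          not_cyc hT had.symm hab hbd.symm rda rab rdb
        refine absurd ?_ hne
        have : ({a,b,d} : Finset (Fin n)) = {d,a,b} := by ext x; simp; tauto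
        rwa [this] at hcyc
      · exact Or.inl rfl

lemma pair_struct (hT : IsTournament r) {s t : Finset (Fin n)} (hs : IsCyclicTriple r s)
    (ht : IsCyclicTriple r t) (hst : s ≠ t) (hint : (s ∩ t).card = 2) :
    ∃ x y w1 w2 : Fin n, r x y ∧ x ≠ y ∧ w1 ≠ w2 ∧ w1 ≠ x ∧ w1 ≠ y ∧ w2 ≠ x ∧ w2 ≠ y ∧
      s = {x, y, w1} ∧ t = {x, y, w2} := by
  obtain ⟨x0, y0, hxy0, hpair⟩ := card_eq_two.mp hint
  have main : ∀ x y : Fin n, x ≠ y → s ∩ t = {x, y} → r x y →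
      ∃ x' y' w1 w2 : Fin n, r x' y' ∧ x' ≠ y' ∧ w1 ≠ w2 ∧ w1 ≠ x' ∧ w1 ≠ y' ∧ w2 ≠ x' ∧
        w2 ≠ y' ∧ s = {x', y', w1} ∧ t = {x', y', w2} := by
    intro x y hxy hpr hr
    have hsc := cyc_card hs
    have htc := cyc_card ht
    have hxs : x ∈ s := (mem_inter.mp (show x ∈ s ∩ t by rw [hpr]; simp)).1
    have hys : y ∈ s := (mem_inter.mp (show y ∈ s ∩ t by rw [hpr]; simp)).1
    have hxt : x ∈ t := (mem_inter.mp (show x ∈ s ∩ t by rw [hpr]; simp)).2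
    have hyt : y ∈ t := (mem_inter.mp (show y ∈ s ∩ t by rw [hpr]; simp)).2
    have h1 : (s \ (s ∩ t)).card = 1 := by
      rw [card_sdiff_of_subset inter_subset_left, hsc, hint]
    obtain ⟨w1, hw1⟩ := card_eq_one.mp h1
    have h2 : (t \ (s ∩ t)).card = 1 := by
      rw [card_sdiff_of_subset inter_subset_right, htc, hint]
    obtain ⟨w2, hw2⟩ := card_eq_one.mp h2
    have hw1m : w1 ∈ s ∧ w1 ∉ s ∩ t := by
      have : w1 ∈ s \ (s ∩ t) := by rw [hw1]; simp
      exact mem_sdiff.mp this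
    have hw2m : w2 ∈ t ∧ w2 ∉ s ∩ t := by
      have : w2 ∈ t \ (s ∩ t) := by rw [hw2]; simp
      exact mem_sdiff.mp this
    have hw1x : w1 ≠ x := by rintro rfl; exact hw1m.2 (by rw [hpr]; simp)
    have hw1y : w1 ≠ y := by rintro rfl; exact hw1m.2 (by rw [hpr]; simp)
    have hw2x : w2 ≠ x := by rintro rfl; exact hw2m.2 (by rw [hpr]; simp)
    have hw2y : w2 ≠ y := by rintro rfl; exact hw2m.2 (by rw [hpr]; simp)
    have hseq : s = {x, y, w1} := by
      refine (eq_of_subset_of_card_le ?_ ?_).symm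
      · intro z hz
        simp only [mem_insert, mem_singleton] at hz
        rcases hz with rfl | rfl | rfl
        exacts [hxs, hys, hw1m.1]
      · rw [hsc, card3 hxy hw1y.symm hw1x.symm]
    have hteq : t = {x, y, w2} := by
      refine (eq_of_subset_of_card_le ?_ ?_).symm
      · intro z hz
        simp only [mem_insert, mem_singleton] at hz
        rcases hz with rfl | rfl | rfl
        exacts [hxt, hyt, hw2m.1]
      · rw [htc, card3 hxy hw2y.symm hw2x.symm]
    have hw12 : w1 ≠ w2 := by
      rintro rfl
      exact hw1m.2 (mem_inter.mpr ⟨hw1m.1, hw2m.1⟩)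
    exact ⟨x, y, w1, w2, hr, hxy, hw12, hw1x, hw1y, hw2x, hw2y, hseq, hteq⟩
  rcases tour_total hT hxy0 with h | h
  · exact main x0 y0 hxy0 hpair h
  · exact main y0 x0 hxy0.symm (by rw [hpair, pair_comm]) h

lemma pair_cycle4 (hT : IsTournament r) {s t : Finset (Fin n)} (hs : IsCyclicTriple r s)
    (ht : IsCyclicTriple r t) (hst : s ≠ t) (hint : (s ∩ t).card = 2) :
    HasCycle4 r (s ∪ t) ∧ (s ∪ t).card = 4 := by
  obtain ⟨x, y, w1, w2, hr, hxy, hw12, hw1x, hw1y, hw2x, hw2y, hseq, hteq⟩ :=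
    pair_struct hT hs ht hst hint
  have hun : s ∪ t = {x, y, w1, w2} := by
    rw [hseq, hteq]; ext z; simp; try tauto
  have hc1 : IsCyclicTriple r {x, y, w1} := hseq ▸ hs
  have hc2 : IsCyclicTriple r {x, y, w2} := hteq ▸ ht
  obtain ⟨ryw1, rw1x⟩ := cyc_shape hT hxy hw1y.symm hw1x.symm hc1 hr
  obtain ⟨ryw2, rw2x⟩ := cyc_shape hT hxy hw2y.symm hw2x.symm hc2 hr
  constructor
  · rcases tour_total hT hw12 with h | h
    · exact ⟨x, y, w1, w2, hxy, hw1x.symm, hw2x.symm, hw1y.symm, hw2y.symm, hw12, hun,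
        hr, ryw1, h, rw2x⟩
    · refine ⟨x, y, w2, w1, hxy, hw2x.symm, hw1x.symm, hw2y.symm, hw1y.symm, hw12.symm,
        ?_, hr, ryw2, h, rw1x⟩
      rw [hun]; ext z; simp; try tauto
  · rw [hun]; exact card4 hxy hw1x.symm hw2x.symm hw1y.symm hw2y.symm hw12

lemma sup_pair (s t : Finset (Fin n)) :
    ({s, t} : Finset (Finset (Fin n))).sup id = s ∪ t := by
  rw [sup_insert, sup_singleton]; rfl

end Stmt6Aux

set_option maxHeartbeats 4000000
open Stmt6Aux

open Classical in
/-- the number of unordered pairs of distinct cyclic triangles sharing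
exactly two vertices equals `C4(T)`; equivalently, writing `a_e` for the number of
vertices `w` such that `{u,v,w}` spans a cyclic triangle (for an edge `e = (u→v)`),
`Σ_e a_e(a_e − 1) = 2·C4(T)`. -/
theorem stmt_6 {n : ℕ} (hn : 4 ≤ n) (r : Fin n → Fin n → Prop) (hT : IsTournament r) :
    ((((univ.powersetCard 3).filter (fun s => IsCyclicTriple r s)).powersetCard 2).filter
        (fun p => ∃ s t : Finset (Fin n), s ≠ t ∧ p = {s, t} ∧ (s ∩ t).card = 2)).card =
      cyc4Count r ∧
    ∑ e ∈ univ.filter (fun e : Fin n × Fin n => r e.1 e.2),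
        (univ.filter (fun w => IsCyclicTriple r {e.1, e.2, w})).card *
          ((univ.filter (fun w => IsCyclicTriple r {e.1, e.2, w})).card - 1) =
      2 * cyc4Count r := by
  have hA : ((((univ.powersetCard 3).filter (fun s => IsCyclicTriple r s)).powersetCard 2).filter
      (fun p => ∃ s t : Finset (Fin n), s ≠ t ∧ p = {s, t} ∧ (s ∩ t).card = 2)).card =
      cyc4Count r := by
    rw [cyc4Count]
    refine Finset.card_bij (fun p _ => p.sup id) ?_ ?_ ?_
    · rintro p hp
      rw [mem_filter] at hp
      obtain ⟨hp1, s, t, hst, rfl, hint⟩ := hp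
      have hpsub := (mem_powersetCard.mp hp1).1
      have hs := (mem_filter.mp (hpsub (by simp : s ∈ ({s, t} : Finset _)))).2
      have ht := (mem_filter.mp (hpsub (by simp : t ∈ ({s, t} : Finset _)))).2
      obtain ⟨h4, hc4⟩ := pair_cycle4 hT hs ht hst hint
      beta_reduce
      rw [sup_pair]
      exact mem_filter.mpr ⟨mem_powersetCard.mpr ⟨subset_univ _, hc4⟩, h4⟩
    · intro p1 hp1 p2 hp2 heq
      rw [mem_filter] at hp1 hp2
      obtain ⟨hq1, s1, t1, hst1, rfl, hint1⟩ := hp1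
      obtain ⟨hq2, s2, t2, hst2, rfl, hint2⟩ := hp2
      have hpsub1 := (mem_powersetCard.mp hq1).1
      have hpsub2 := (mem_powersetCard.mp hq2).1
      have hs1 := (mem_filter.mp (hpsub1 (by simp : s1 ∈ ({s1, t1} : Finset _)))).2
      have ht1 := (mem_filter.mp (hpsub1 (by simp : t1 ∈ ({s1, t1} : Finset _)))).2
      have hs2 := (mem_filter.mp (hpsub2 (by simp : s2 ∈ ({s2, t2} : Finset _)))).2
      have ht2 := (mem_filter.mp (hpsub2 (by simp : t2 ∈ ({s2, t2} : Finset _)))).2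
      beta_reduce at heq
      rw [sup_pair, sup_pair] at heq
      obtain ⟨h4, _⟩ := pair_cycle4 hT hs1 ht1 hst1 hint1
      obtain ⟨s0, t0, hst0, hF⟩ := cyc4_pair hT h4
      have hmem : ∀ s t : Finset (Fin n), IsCyclicTriple r s → IsCyclicTriple r t → s ≠ t →
          s ∪ t = s1 ∪ t1 → ({s, t} : Finset (Finset (Fin n))) = {s0, t0} := by
        intro s t hs ht hst hu
        have hsF : s ∈ ((s1 ∪ t1).powersetCard 3).filter (fun s => IsCyclicTriple r s) :=
          mem_filter.mpr ⟨mem_powersetCard.mpr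
            ⟨by rw [← hu]; exact subset_union_left, cyc_card hs⟩, hs⟩
        have htF : t ∈ ((s1 ∪ t1).powersetCard 3).filter (fun s => IsCyclicTriple r s) :=
          mem_filter.mpr ⟨mem_powersetCard.mpr
            ⟨by rw [← hu]; exact subset_union_right, cyc_card ht⟩, ht⟩
        rw [hF] at hsF htF
        simp only [mem_insert, mem_singleton] at hsF htF
        rcases hsF with rfl | rfl <;> rcases htF with rfl | rfl
        · exact absurd rfl hst
        · rfl
        · exact pair_comm _ _
        · exact absurd rfl hst
      rw [hmem s1 t1 hs1 ht1 hst1 rfl, hmem s2 t2 hs2 ht2 hst2 heq.symm]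
    · intro u hu
      rw [mem_filter] at hu
      obtain ⟨hu1, h4⟩ := hu
      obtain ⟨husub, hucard⟩ := mem_powersetCard.mp hu1
      obtain ⟨s0, t0, hst0, hF⟩ := cyc4_pair hT h4
      have hs0 : s0 ∈ (u.powersetCard 3).filter (fun s => IsCyclicTriple r s) := by
        rw [hF]; simp
      have ht0 : t0 ∈ (u.powersetCard 3).filter (fun s => IsCyclicTriple r s) := by
        rw [hF]; simp
      rw [mem_filter, mem_powersetCard] at hs0 ht0
      obtain ⟨⟨hs0u, hs0c⟩, hs0cyc⟩ := hs0
      obtain ⟨⟨ht0u, ht0c⟩, ht0cyc⟩ := ht0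
      have hnsub : ¬ t0 ⊆ s0 := by
        intro hsub
        exact hst0 (eq_of_subset_of_card_le hsub (by omega)).symm
      obtain ⟨x, hxt0, hxs0⟩ := not_subset.mp hnsub
      have h4le : 4 ≤ (s0 ∪ t0).card := by
        have h1 : insert x s0 ⊆ s0 ∪ t0 :=
          insert_subset (mem_union_right _ hxt0) subset_union_left
        have h2 := card_le_card h1
        rw [card_insert_of_notMem hxs0, hs0c] at h2
        omega
      have hule : (s0 ∪ t0).card ≤ 4 := by
        have := card_le_card (union_subset hs0u ht0u); omega
      have huneq : s0 ∪ t0 = u :=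
        eq_of_subset_of_card_le (union_subset hs0u ht0u) (by omega)
      have hintc : (s0 ∩ t0).card = 2 := by
        have := card_union_add_card_inter s0 t0
        rw [hs0c, ht0c] at this
        omega
      refine ⟨{s0, t0}, ?_, ?_⟩
      · rw [mem_filter]
        refine ⟨mem_powersetCard.mpr ⟨?_, card_pair hst0⟩, s0, t0, hst0, rfl, hintc⟩
        intro z hz
        simp only [mem_insert, mem_singleton] at hz
        rcases hz with rfl | rfl
        · exact mem_filter.mpr ⟨mem_powersetCard.mpr ⟨subset_univ _, hs0c⟩, hs0cyc⟩
        · exact mem_filter.mpr ⟨mem_powersetCard.mpr ⟨subset_univ _, ht0c⟩, ht0cyc⟩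
      · beta_reduce
        rw [sup_pair]; exact huneq
  refine ⟨hA, ?_⟩
  have hstep1 : ∀ e ∈ univ.filter (fun e : Fin n × Fin n => r e.1 e.2),
      (univ.filter (fun w => IsCyclicTriple r {e.1, e.2, w})).card *
        ((univ.filter (fun w => IsCyclicTriple r {e.1, e.2, w})).card - 1) =
      ((univ.filter (fun w => IsCyclicTriple r {e.1, e.2, w})).offDiag).card := by
    intro e _
    rw [Finset.offDiag_card]
    generalize (univ.filter (fun w => IsCyclicTriple r {e.1, e.2, w})).card = a
    cases a with
    | zero => rfl
    | succ k => rw [Nat.succ_sub_one, Nat.mul_succ, Nat.add_sub_cancel]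
  rw [Finset.sum_congr rfl hstep1, ← Finset.card_sigma]
  have hsig : ((univ.filter (fun e : Fin n × Fin n => r e.1 e.2)).sigma
      (fun e => (univ.filter (fun w => IsCyclicTriple r {e.1, e.2, w})).offDiag)).card =
      ((((univ.powersetCard 3).filter (fun s => IsCyclicTriple r s)) ×ˢ
        ((univ.powersetCard 3).filter (fun s => IsCyclicTriple r s))).filter
        (fun q => q.1 ≠ q.2 ∧ (q.1 ∩ q.2).card = 2)).card := by
    refine Finset.card_bij (fun x _ => (({x.1.1, x.1.2, x.2.1} : Finset (Fin n)),
      ({x.1.1, x.1.2, x.2.2} : Finset (Fin n)))) ?_ ?_ ?_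
    · intro x hx
      beta_reduce
      rw [mem_sigma, mem_filter, mem_offDiag] at hx
      obtain ⟨⟨-, hre⟩, hw1, hw2, hne⟩ := hx
      have hc1 : IsCyclicTriple r {x.1.1, x.1.2, x.2.1} := (mem_filter.mp hw1).2
      have hc2 : IsCyclicTriple r {x.1.1, x.1.2, x.2.2} := (mem_filter.mp hw2).2
      obtain ⟨huv, hvw1, huw1⟩ := card3_distinct (cyc_card hc1)
      obtain ⟨-, hvw2, huw2⟩ := card3_distinct (cyc_card hc2)
      have huw1' := huw1.symm
      have hvw1' := hvw1.symm
      have huw2' := huw2.symm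
      have hvw2' := hvw2.symm
      rw [mem_filter, mem_product]
      dsimp only
      refine ⟨⟨mem_filter.mpr ⟨mem_powersetCard.mpr ⟨subset_univ _, cyc_card hc1⟩, hc1⟩,
        mem_filter.mpr ⟨mem_powersetCard.mpr ⟨subset_univ _, cyc_card hc2⟩, hc2⟩⟩, ?_, ?_⟩
      · intro h
        have : x.2.1 ∈ ({x.1.1, x.1.2, x.2.2} : Finset (Fin n)) := by rw [← h]; simp
        simp only [mem_insert, mem_singleton] at this
        tauto
      · have hi : ({x.1.1, x.1.2, x.2.1} : Finset (Fin n)) ∩ {x.1.1, x.1.2, x.2.2} =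
            {x.1.1, x.1.2} := by
          ext z
          simp only [mem_inter, mem_insert, mem_singleton]
          constructor
          · rintro ⟨rfl | rfl | rfl, h2⟩ <;> tauto
          · rintro (rfl | rfl) <;> tauto
        rw [hi, card_pair huv]
    · intro x hx y hy heq
      beta_reduce at heq
      rw [Prod.mk.injEq] at heq
      obtain ⟨h1, h2⟩ := heq
      rw [mem_sigma, mem_filter, mem_offDiag] at hx hy
      obtain ⟨⟨-, hrex⟩, hw1x, hw2x, hnex⟩ := hx
      obtain ⟨⟨-, hrey⟩, hw1y, hw2y, hney⟩ := hy
      have hc1x : IsCyclicTriple r {x.1.1, x.1.2, x.2.1} := (mem_filter.mp hw1x).2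
      have hc2x : IsCyclicTriple r {x.1.1, x.1.2, x.2.2} := (mem_filter.mp hw2x).2
      have hc1y : IsCyclicTriple r {y.1.1, y.1.2, y.2.1} := (mem_filter.mp hw1y).2
      have hc2y : IsCyclicTriple r {y.1.1, y.1.2, y.2.2} := (mem_filter.mp hw2y).2
      obtain ⟨huvx, hvw1x, huw1x⟩ := card3_distinct (cyc_card hc1x)
      obtain ⟨-, hvw2x, huw2x⟩ := card3_distinct (cyc_card hc2x)
      obtain ⟨huvy, hvw1y, huw1y⟩ := card3_distinct (cyc_card hc1y)
      obtain ⟨-, hvw2y, huw2y⟩ := card3_distinct (cyc_card hc2y)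
      have hintx : ({x.1.1, x.1.2, x.2.1} : Finset (Fin n)) ∩ {x.1.1, x.1.2, x.2.2} =
          {x.1.1, x.1.2} := by
        have h1' := huw1x.symm; have h2' := hvw1x.symm
        have h3' := huw2x.symm; have h4' := hvw2x.symm
        ext z
        simp only [mem_inter, mem_insert, mem_singleton]
        constructor
        · rintro ⟨rfl | rfl | rfl, hz2⟩ <;> tauto
        · rintro (rfl | rfl) <;> tauto
      have hinty : ({y.1.1, y.1.2, y.2.1} : Finset (Fin n)) ∩ {y.1.1, y.1.2, y.2.2} =
          {y.1.1, y.1.2} := by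
        have h1' := huw1y.symm; have h2' := hvw1y.symm
        have h3' := huw2y.symm; have h4' := hvw2y.symm
        ext z
        simp only [mem_inter, mem_insert, mem_singleton]
        constructor
        · rintro ⟨rfl | rfl | rfl, hz2⟩ <;> tauto
        · rintro (rfl | rfl) <;> tauto
      have hpp : ({x.1.1, x.1.2} : Finset (Fin n)) = {y.1.1, y.1.2} := by
        rw [← hintx, ← hinty, h1, h2]
      rcases pair_eq_pair' huvx hpp with ⟨e1, e2⟩ | ⟨e1, e2⟩
      · have hw1 : x.2.1 = y.2.1 := by
          have : x.2.1 ∈ ({y.1.1, y.1.2, y.2.1} : Finset (Fin n)) := by rw [← h1]; simp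
          simp only [mem_insert, mem_singleton] at this
          rcases this with h | h | h
          · exact absurd (h.trans e1.symm).symm huw1x
          · exact absurd (h.trans e2.symm).symm hvw1x
          · exact h
        have hw2 : x.2.2 = y.2.2 := by
          have : x.2.2 ∈ ({y.1.1, y.1.2, y.2.2} : Finset (Fin n)) := by rw [← h2]; simp
          simp only [mem_insert, mem_singleton] at this
          rcases this with h | h | h
          · exact absurd (h.trans e1.symm).symm huw2x
          · exact absurd (h.trans e2.symm).symm hvw2x
          · exact h
        exact Sigma.ext (Prod.ext_iff.mpr ⟨e1, e2⟩)
          (heq_of_eq (Prod.ext_iff.mpr ⟨hw1, hw2⟩))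
      · exfalso
        rw [e1, e2] at hrex
        exact tour_asym hT hrey hrex
    · intro q hq
      rw [mem_filter, mem_product] at hq
      obtain ⟨⟨hq1, hq2⟩, hqne, hqint⟩ := hq
      have hcyc1 : IsCyclicTriple r q.1 := (mem_filter.mp hq1).2
      have hcyc2 : IsCyclicTriple r q.2 := (mem_filter.mp hq2).2
      obtain ⟨x, y, w1, w2, hr, hxy, hw12, hw1x, hw1y, hw2x, hw2y, hseq, hteq⟩ :=
        pair_struct hT hcyc1 hcyc2 hqne hqint
      refine ⟨⟨(x, y), (w1, w2)⟩, ?_, ?_⟩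
      · rw [mem_sigma]
        refine ⟨mem_filter.mpr ⟨mem_univ _, hr⟩, ?_⟩
        rw [mem_offDiag]
        exact ⟨mem_filter.mpr ⟨mem_univ _, hseq ▸ hcyc1⟩,
          mem_filter.mpr ⟨mem_univ _, hteq ▸ hcyc2⟩, hw12⟩
      · beta_reduce
        exact Prod.ext_iff.mpr ⟨hseq.symm, hteq.symm⟩
  rw [hsig, ← hA]
  have hmap : ∀ q ∈ (((univ.powersetCard 3).filter (fun s => IsCyclicTriple r s)) ×ˢ
      ((univ.powersetCard 3).filter (fun s => IsCyclicTriple r s))).filter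
      (fun q => q.1 ≠ q.2 ∧ (q.1 ∩ q.2).card = 2),
      ({q.1, q.2} : Finset (Finset (Fin n))) ∈
      (((univ.powersetCard 3).filter (fun s => IsCyclicTriple r s)).powersetCard 2).filter
        (fun p => ∃ s t : Finset (Fin n), s ≠ t ∧ p = {s, t} ∧ (s ∩ t).card = 2) := by
    intro q hq
    rw [mem_filter, mem_product] at hq
    obtain ⟨⟨h1, h2⟩, hne, hic⟩ := hq
    refine mem_filter.mpr ⟨mem_powersetCard.mpr ⟨?_, card_pair hne⟩, q.1, q.2, hne, rfl, hic⟩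
    intro z hz
    simp only [mem_insert, mem_singleton] at hz
    rcases hz with rfl | rfl
    exacts [h1, h2]
  rw [Finset.card_eq_sum_card_fiberwise hmap]
  have hfib2 : ∀ p ∈ (((univ.powersetCard 3).filter (fun s => IsCyclicTriple r s)).powersetCard
      2).filter (fun p => ∃ s t : Finset (Fin n), s ≠ t ∧ p = {s, t} ∧ (s ∩ t).card = 2),
      (((((univ.powersetCard 3).filter (fun s => IsCyclicTriple r s)) ×ˢ
        ((univ.powersetCard 3).filter (fun s => IsCyclicTriple r s))).filter
        (fun q => q.1 ≠ q.2 ∧ (q.1 ∩ q.2).card = 2)).filter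
        (fun q => ({q.1, q.2} : Finset (Finset (Fin n))) = p)).card = 2 := by
    intro p hp
    rw [mem_filter] at hp
    obtain ⟨hp1, s0, t0, hst0, rfl, hint0⟩ := hp
    have hpsub := (mem_powersetCard.mp hp1).1
    have hs0C := hpsub (by simp : s0 ∈ ({s0, t0} : Finset _))
    have ht0C := hpsub (by simp : t0 ∈ ({s0, t0} : Finset _))
    have hset : ((((univ.powersetCard 3).filter (fun s => IsCyclicTriple r s)) ×ˢ
        ((univ.powersetCard 3).filter (fun s => IsCyclicTriple r s))).filter
        (fun q => q.1 ≠ q.2 ∧ (q.1 ∩ q.2).card = 2)).filter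
        (fun q => ({q.1, q.2} : Finset (Finset (Fin n))) = {s0, t0}) =
        {(s0, t0), (t0, s0)} := by
      ext q
      simp only [mem_filter, mem_product, mem_insert, mem_singleton]
      constructor
      · rintro ⟨⟨⟨hq1, hq2⟩, hqne, hqint⟩, hqp⟩
        rcases pair_eq_pair' hqne hqp with ⟨e1, e2⟩ | ⟨e1, e2⟩
        · exact Or.inl (Prod.ext_iff.mpr ⟨e1, e2⟩)
        · exact Or.inr (Prod.ext_iff.mpr ⟨e1, e2⟩)
      · rintro (rfl | rfl)
        · exact ⟨⟨⟨mem_filter.mp hs0C, mem_filter.mp ht0C⟩, hst0, hint0⟩, rfl⟩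
        · exact ⟨⟨⟨mem_filter.mp ht0C, mem_filter.mp hs0C⟩, hst0.symm,
            by rw [inter_comm]; exact hint0⟩, pair_comm _ _⟩
    rw [hset, card_pair]
    intro h
    exact hst0 (congrArg Prod.fst h)
  rw [Finset.sum_congr rfl hfib2, Finset.sum_const, smul_eq_mul, mul_comm]
end
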